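/- arXiv:1010.3688 — 2 statements merged into one kernel-verified Lean document; each statement's English description precedes it below -/
import Mathlib

section
/- Let {A_k : ℝ^m → ℝ^m, k ∈ ℤ} be a sequence of linear isomorphisms for which there is a constant N > 0 with ‖A_k‖ ≤ N and ‖A_k⁻¹‖ ≤ N for all k. Then the following two statements are equivalent: (a) for every bounded sequence {w_k ∈ ℝ^m, k ∈ ℤ} there exists a bounded sequence {v_k ∈ ℝ^m, k ∈ ℤ} such that v_{k+1} = A_k v_k + w_k for all k ∈ ℤ; (b) the sequence {A_k} is hyperbolic on the ray [0, +∞), hyperbolic on the ray (−∞, 0], and the subspaces B⁺(𝒜) and B⁻(𝒜) are transverse, i.e. B⁺(𝒜) + B⁻(𝒜) = ℝ^m. -/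
open Filter Topology

/-- Transition map `Φ(k,l)` for `k = l + n`, `n ≥ 0`:
`Φ(l+n+1, l) = A_{l+n} ∘ Φ(l+n, l)`. -/
noncomputable def PhiPos {m : ℕ}
    (A : ℤ → (EuclideanSpace ℝ (Fin m) ≃L[ℝ] EuclideanSpace ℝ (Fin m))) (l : ℤ) :
    ℕ → (EuclideanSpace ℝ (Fin m) →L[ℝ] EuclideanSpace ℝ (Fin m))
  | 0 => 1
  | n + 1 =>
      ((A (l + n) : EuclideanSpace ℝ (Fin m) →L[ℝ] EuclideanSpace ℝ (Fin m))).comp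
        (PhiPos A l n)

/-- Transition map `Φ(k,l)` for `l = k + n`, `n ≥ 0`:
`Φ(k, k+n+1) = Φ(k, k+n) ∘ A_{k+n}⁻¹`. -/
noncomputable def PhiNeg {m : ℕ}
    (A : ℤ → (EuclideanSpace ℝ (Fin m) ≃L[ℝ] EuclideanSpace ℝ (Fin m))) (k : ℤ) :
    ℕ → (EuclideanSpace ℝ (Fin m) →L[ℝ] EuclideanSpace ℝ (Fin m))
  | 0 => 1
  | n + 1 =>
      (PhiNeg A k n).comp
        (((A (k + n)).symm : EuclideanSpace ℝ (Fin m) →L[ℝ] EuclideanSpace ℝ (Fin m)))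

/-- The transition maps `Φ(k,l)`: `Φ(k,l) = A_{k-1} ∘ ⋯ ∘ A_l` for `l < k`,
`Φ(k,k) = Id`, and `Φ(k,l) = A_k⁻¹ ∘ ⋯ ∘ A_{l-1}⁻¹` for `l > k`. -/
noncomputable def Phi {m : ℕ}
    (A : ℤ → (EuclideanSpace ℝ (Fin m) ≃L[ℝ] EuclideanSpace ℝ (Fin m))) (k l : ℤ) :
    EuclideanSpace ℝ (Fin m) →L[ℝ] EuclideanSpace ℝ (Fin m) :=
  if l ≤ k then PhiPos A l (k - l).toNat else PhiNeg A k (l - k).toNat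

/-- `B⁺(𝒜) = {v : ‖Φ(k,0)v‖ → 0 as k → +∞}`. -/
def Bplus {m : ℕ}
    (A : ℤ → (EuclideanSpace ℝ (Fin m) ≃L[ℝ] EuclideanSpace ℝ (Fin m))) :
    Set (EuclideanSpace ℝ (Fin m)) :=
  {v | Tendsto (fun k : ℤ => ‖Phi A k 0 v‖) atTop (𝓝 0)}

/-- `B⁻(𝒜) = {v : ‖Φ(k,0)v‖ → 0 as k → -∞}`. -/
def Bminus {m : ℕ}
    (A : ℤ → (EuclideanSpace ℝ (Fin m) ≃L[ℝ] EuclideanSpace ℝ (Fin m))) :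
    Set (EuclideanSpace ℝ (Fin m)) :=
  {v | Tendsto (fun k : ℤ => ‖Phi A k 0 v‖) atBot (𝓝 0)}

/-- The sequence `𝒜` is hyperbolic on the ray `[0, +∞)`. -/
def HyperbolicOnPlusRay {m : ℕ}
    (A : ℤ → (EuclideanSpace ℝ (Fin m) ≃L[ℝ] EuclideanSpace ℝ (Fin m))) : Prop :=
  ∃ (C lam : ℝ)
    (P : ℤ → (EuclideanSpace ℝ (Fin m) →L[ℝ] EuclideanSpace ℝ (Fin m))),
    0 < C ∧ lam ∈ Set.Ioo (0 : ℝ) 1 ∧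
    (∀ k : ℤ, 0 ≤ k → (P k).comp (P k) = P k) ∧
    (∀ k l : ℤ, 0 ≤ k → 0 ≤ l → (P k).comp (Phi A k l) = (Phi A k l).comp (P l)) ∧
    (∀ k l : ℤ, 0 ≤ l → l ≤ k → ∀ v : EuclideanSpace ℝ (Fin m),
      ‖Phi A k l (P l v)‖ ≤ C * lam ^ (k - l).toNat * ‖v‖) ∧
    (∀ k l : ℤ, 0 ≤ k → k ≤ l → ∀ v : EuclideanSpace ℝ (Fin m),
      ‖Phi A k l ((1 - P l) v)‖ ≤ C * lam ^ (l - k).toNat * ‖v‖)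

/-- The sequence `𝒜` is hyperbolic on the ray `(-∞, 0]`. -/
def HyperbolicOnMinusRay {m : ℕ}
    (A : ℤ → (EuclideanSpace ℝ (Fin m) ≃L[ℝ] EuclideanSpace ℝ (Fin m))) : Prop :=
  ∃ (C lam : ℝ)
    (Q : ℤ → (EuclideanSpace ℝ (Fin m) →L[ℝ] EuclideanSpace ℝ (Fin m))),
    0 < C ∧ lam ∈ Set.Ioo (0 : ℝ) 1 ∧
    (∀ k : ℤ, k ≤ 0 → (Q k).comp (Q k) = Q k) ∧
    (∀ k l : ℤ, k ≤ 0 → l ≤ 0 → (Q k).comp (Phi A k l) = (Phi A k l).comp (Q l)) ∧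
    (∀ k l : ℤ, l ≤ k → k ≤ 0 → ∀ v : EuclideanSpace ℝ (Fin m),
      ‖Phi A k l (Q l v)‖ ≤ C * lam ^ (k - l).toNat * ‖v‖) ∧
    (∀ k l : ℤ, k ≤ l → l ≤ 0 → ∀ v : EuclideanSpace ℝ (Fin m),
      ‖Phi A k l ((1 - Q l) v)‖ ≤ C * lam ^ (l - k).toNat * ‖v‖)

/-!
(⇐) On each ray the dichotomy projections `P` define a Green's function, `G(k, i) = Φ(k, i) P_i`
for `i ≤ k` and `-Φ(k, i) (1 - P_i)` for `i > k`, of size `C λ^|k - i|`, and `∑ᵢ G(k, i) w_{i-1}`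
is a bounded solution on that ray. The two ray solutions differ at time `0` by a vector that
transversality splits as `x + y`, `x ∈ B⁺`, `y ∈ B⁻`; subtracting the orbit of `x` on `[0, ∞)` and
adding that of `y` on `(-∞, 0]` glues them together.

(⇒) The reversed sequence `A_{-1-k}⁻¹` exchanges the two rays and, by the bounds on `A_k` and
`A_k⁻¹`, inherits bounded solvability, so it suffices to work on `[0, ∞)`. There fix a projection
`Pr` onto the initial values of bounded orbits. By the open mapping theorem the solution operator
`w ↦ y` on `ℓ^∞`, normalised by `Pr (y 0) = 0`, is bounded by some `K`. Testing it on the forcings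
`w_n = (c_{n+1} - c_n) z_{n+1}`, `z` a homogeneous solution, gives Perron's inequality
`‖z_k‖ ∑ᵢ ‖z_i‖⁻¹ ≤ K`, which forces exponential decay on the stable and growth on the unstable
part; transporting `Pr` along the flow gives the dichotomy. Finally, the bounded solution forced by
a single impulse `u` at time `-1` splits `u` into a vector with bounded forward orbit (in `B⁺`) and
one with bounded backward orbit (in `B⁻`).
-/

open scoped ENNReal

local notation "𝔼" m:max => EuclideanSpace ℝ (Fin m)

lemma hasSum_pow_natAbs {r : ℝ} (h0 : 0 ≤ r) (h1 : r < 1) :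
    HasSum (fun n : ℤ => r ^ n.natAbs) ((1 + r) / (1 - r)) := by
  have hgeom := hasSum_geometric_of_lt_one h0 h1
  have hneg : HasSum (fun n : ℕ => r ^ (-((n : ℤ) + 1)).natAbs) (r * (1 - r)⁻¹) := by
    have h : (fun n : ℕ => r ^ (-((n : ℤ) + 1)).natAbs) = fun n => r * r ^ n := by
      funext n
      rw [show (-((n : ℤ) + 1)).natAbs = n + 1 by omega, pow_succ']
    exact h ▸ hgeom.mul_left r
  convert HasSum.of_nat_of_neg_add_one (f := fun n : ℤ => r ^ n.natAbs) (by simpa using hgeom)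
    hneg using 1
  ring

lemma summable_and_norm_tsum_le_of_le_pow_natAbs {E : Type*} [NormedAddCommGroup E]
    [CompleteSpace E] {F : ℤ → E} {c r : ℝ} (k : ℤ) (h0 : 0 ≤ r) (h1 : r < 1)
    (hF : ∀ i, ‖F i‖ ≤ c * r ^ (k - i).natAbs) :
    Summable F ∧ ‖∑' i, F i‖ ≤ c * ((1 + r) / (1 - r)) := by
  have hg : HasSum (fun i => c * r ^ (k - i).natAbs) (c * ((1 + r) / (1 - r))) := by
    have h := (Equiv.subLeft k).hasSum_iff (f := fun n : ℤ => c * r ^ n.natAbs)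
      (a := c * ((1 + r) / (1 - r)))
    simpa [Function.comp_def] using h.2 ((hasSum_pow_natAbs h0 h1).mul_left c)
  have hs : Summable F := .of_norm_bounded hg.summable hF
  exact ⟨hs, hs.hasSum.norm_le_of_bounded hg hF⟩

lemma le_pow_mul_of_mul_sum_inv_le {x : ℕ → ℝ} (hx : ∀ n, 0 < x n) {K : ℝ} (hK : 0 < K) {n : ℕ}
    (h : ∀ j, 1 ≤ j → j ≤ n → x j * ∑ i ∈ Finset.range j, (x i)⁻¹ ≤ K) :
    x n ≤ (K + 1) * (K / (K + 1)) ^ n * x 0 := by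
  set b : ℕ → ℝ := fun j => ∑ i ∈ Finset.range j, (x i)⁻¹
  have hb_pos (j : ℕ) (hj : 1 ≤ j) : 0 < b j :=
    Finset.sum_pos (fun i _ => inv_pos.2 (hx i)) ⟨0, Finset.mem_range.2 hj⟩
  -- each new term `(x j)⁻¹ ≥ b j / K` multiplies the partial sum by at least `(K + 1) / K`
  have hgrowth (j : ℕ) (hj : 1 ≤ j) (hjn : j ≤ n) :
      K ≤ (K + 1) * (K / (K + 1)) ^ j * x 0 * b j := by
    induction j, hj using Nat.le_induction with
    | base =>
      apply le_of_eq
      simp only [b, Finset.sum_range_one, pow_one]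
      field_simp [(hx 0).ne']
    | succ j hj ih =>
      have hstep : b j ≤ K / (K + 1) * b (j + 1) := by
        have hxj : b j ≤ K * (x j)⁻¹ := by
          rw [← div_eq_mul_inv, le_div_iff₀ (hx j), mul_comm]
          exact h j hj (by omega)
        rw [show b (j + 1) = b j + (x j)⁻¹ from Finset.sum_range_succ _ _,
          div_mul_eq_mul_div, le_div_iff₀ (by positivity)]
        nlinarith
      have hx0 := hx 0
      calc K ≤ (K + 1) * (K / (K + 1)) ^ j * x 0 * b j := ih (by omega)
        _ ≤ (K + 1) * (K / (K + 1)) ^ j * x 0 * (K / (K + 1) * b (j + 1)) := by gcongr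
        _ = (K + 1) * (K / (K + 1)) ^ (j + 1) * x 0 * b (j + 1) := by ring
  rcases n.eq_zero_or_pos with rfl | hn
  · nlinarith [hx 0]
  · exact le_of_mul_le_mul_right ((h n hn le_rfl).trans (hgrowth n hn le_rfl)) (hb_pos n hn)

lemma Memℓp.of_forall_ge_eq {E : Type*} [NormedAddCommGroup E] {f g : ℕ → E} (hg : Memℓp g ∞)
    (n₀ : ℕ) (h : ∀ n ≥ n₀, f n = g n) : Memℓp f ∞ := by
  have hfg : Memℓp (f - g) ∞ := memℓp_infty
    (tendsto_atTop_of_eventually_const (x := 0) (i₀ := n₀) fun n hn => by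
      simp [h n hn]).bddAbove_range
  simpa using hfg.add hg

lemma sum_Ico_sub_eq_sum_range {M : Type*} [AddCommMonoid M] (f : ℕ → M) {j l : ℕ} (hj : j ≤ l) :
    ∑ i ∈ Finset.Ico (l - j) l, f (i + 1) = ∑ i ∈ Finset.range j, f (l - i) := by
  rw [Finset.sum_Ico_eq_sum_range, Nat.sub_sub_self hj, ← Finset.sum_range_reflect]
  refine Finset.sum_congr rfl fun i hi => ?_
  rw [Finset.mem_range] at hi
  congr 1
  omega

lemma tendsto_pow_toNat_atTop {r : ℝ} (h0 : 0 ≤ r) (h1 : r < 1) :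
    Tendsto (fun k : ℤ => r ^ k.toNat) atTop (𝓝 0) :=
  (tendsto_pow_atTop_nhds_zero_of_lt_one h0 h1).comp
    (tendsto_atTop_atTop.2 fun n => ⟨n, fun k hk => by omega⟩)

section TransitionMaps

variable {m : ℕ} (A : ℤ → (𝔼 m ≃L[ℝ] 𝔼 m))

lemma phiNeg_succ_eq_comp (k : ℤ) (n : ℕ) :
    PhiNeg A k (n + 1) = ((A k).symm : 𝔼 m →L[ℝ] 𝔼 m).comp (PhiNeg A (k + 1) n) := by
  induction n generalizing k with
  | zero => ext v; simp [PhiNeg]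
  | succ n ih =>
    rw [PhiNeg, ih, PhiNeg, ContinuousLinearMap.comp_assoc]
    congr 3
    push_cast
    ring_nf

@[simp]
lemma phi_self (k : ℤ) : Phi A k k = 1 := by
  simp [Phi, PhiPos]

@[simp]
lemma phi_self_apply (k : ℤ) (v : 𝔼 m) : Phi A k k v = v := by
  rw [phi_self, one_apply_eq_self]

lemma phi_succ (k l : ℤ) : Phi A (k + 1) l = (A k : 𝔼 m →L[ℝ] 𝔼 m).comp (Phi A k l) := by
  rcases le_or_gt l k with hlk | hkl
  · rw [Phi, Phi, if_pos (by omega), if_pos hlk,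
      show (k + 1 - l).toNat = (k - l).toNat + 1 by omega, PhiPos,
      show l + ((k - l).toNat : ℤ) = k by omega]
  · rcases eq_or_lt_of_le (show k + 1 ≤ l by omega) with rfl | hlt
    · rw [phi_self, Phi, if_neg (by omega), show (k + 1 - k).toNat = 0 + 1 by omega,
        phiNeg_succ_eq_comp, ← ContinuousLinearMap.comp_assoc]
      ext v; simp [PhiNeg]
    · rw [Phi, Phi, if_neg (by omega), if_neg (by omega),
        show (l - k).toNat = (l - (k + 1)).toNat + 1 by omega, phiNeg_succ_eq_comp,
        ← ContinuousLinearMap.comp_assoc]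
      ext v; simp

lemma phi_succ_apply (k l : ℤ) (v : 𝔼 m) : Phi A (k + 1) l v = A k (Phi A k l v) := by
  rw [phi_succ]; rfl

lemma phi_pred_apply (k l : ℤ) (v : 𝔼 m) : Phi A (k - 1) l v = (A (k - 1)).symm (Phi A k l v) := by
  rw [← (A (k - 1)).symm_apply_apply (Phi A (k - 1) l v), ← phi_succ_apply, sub_add_cancel]

lemma eq_of_forall_succ {F G : ℤ → (𝔼 m →L[ℝ] 𝔼 m)}
    (hF : ∀ k, F (k + 1) = (A k : 𝔼 m →L[ℝ] 𝔼 m).comp (F k))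
    (hG : ∀ k, G (k + 1) = (A k : 𝔼 m →L[ℝ] 𝔼 m).comp (G k)) {j : ℤ} (hj : F j = G j) :
    F = G := by
  funext k
  induction k using Int.inductionOn' (b := j) with
  | zero => exact hj
  | succ k _ ih => rw [hF, hG, ih]
  | pred k _ ih =>
    have h : (A (k - 1) : 𝔼 m →L[ℝ] 𝔼 m).comp (F (k - 1)) =
        (A (k - 1) : 𝔼 m →L[ℝ] 𝔼 m).comp (G (k - 1)) := by
      rw [← hF, ← hG, sub_add_cancel, ih]
    simpa [← ContinuousLinearMap.comp_assoc] using
      congrArg (((A (k - 1)).symm : 𝔼 m →L[ℝ] 𝔼 m).comp ·) h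

lemma phi_comp (k j l : ℤ) : (Phi A k j).comp (Phi A j l) = Phi A k l := by
  refine congrFun (eq_of_forall_succ A (F := fun k => (Phi A k j).comp (Phi A j l))
    (G := fun k => Phi A k l) (fun k => ?_) (fun k => phi_succ A k l) (j := j) ?_) k
  · simp only [phi_succ, ContinuousLinearMap.comp_assoc]
  · ext; simp

lemma phi_phi_apply (k j l : ℤ) (v : 𝔼 m) : Phi A k j (Phi A j l v) = Phi A k l v := by
  rw [← phi_comp A k j l]; rfl

def timeReverse : ℤ → (𝔼 m ≃L[ℝ] 𝔼 m) := fun k => (A (-1 - k)).symm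

lemma phi_timeReverse (k l : ℤ) : Phi (timeReverse A) k l = Phi A (-k) (-l) := by
  refine congrFun (eq_of_forall_succ (timeReverse A) (F := fun k => Phi (timeReverse A) k l)
    (G := fun k => Phi A (-k) (-l)) (fun k => phi_succ _ k l) (fun k => ?_) (j := l) (by simp)) k
  refine ContinuousLinearMap.ext fun v => ?_
  simp only [ContinuousLinearMap.comp_apply, ContinuousLinearEquiv.coe_coe, timeReverse]
  rw [show -1 - k = -k - 1 by ring, ← phi_pred_apply, neg_add']

lemma phi_natCast_succ_apply (n : ℕ) (l : ℤ) (v : 𝔼 m) :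
    Phi A (n + 1 : ℕ) l v = A n (Phi A n l v) := by
  rw [Nat.cast_succ, phi_succ_apply]

lemma phi_apply_ne_zero (k l : ℤ) {v : 𝔼 m} (hv : v ≠ 0) : Phi A k l v ≠ 0 := fun h =>
  hv (by simpa [phi_phi_apply, h] using (phi_phi_apply A l k l v).symm)

lemma eq_phi_of_forall_succ {d : ℕ → 𝔼 m} (hd : ∀ n : ℕ, d (n + 1) = A n (d n)) (n : ℕ) :
    d n = Phi A n 0 (d 0) := by
  induction n with
  | zero => simp
  | succ n ih => rw [hd, ih, phi_natCast_succ_apply]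

end TransitionMaps

variable {m : ℕ} in
def BoundedSolvable (A : ℤ → (𝔼 m ≃L[ℝ] 𝔼 m)) : Prop :=
  ∀ w : ℤ → 𝔼 m, (∃ C : ℝ, ∀ k : ℤ, ‖w k‖ ≤ C) →
    ∃ v : ℤ → 𝔼 m, (∃ C : ℝ, ∀ k : ℤ, ‖v k‖ ≤ C) ∧ ∀ k : ℤ, v (k + 1) = A k (v k) + w k

variable {m : ℕ} in
def BoundedSolvableOnNat (A : ℤ → (𝔼 m ≃L[ℝ] 𝔼 m)) : Prop :=
  ∀ w : ℕ → 𝔼 m, Memℓp w ∞ → ∃ v : ℕ → 𝔼 m, Memℓp v ∞ ∧ ∀ n : ℕ, v (n + 1) = A n (v n) + w n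

namespace BoundedSolvable

variable {m : ℕ} {A : ℤ → (𝔼 m ≃L[ℝ] 𝔼 m)}

lemma reverse {N : ℝ} (hA : ∀ k, ‖(A k : 𝔼 m →L[ℝ] 𝔼 m)‖ ≤ N) (h : BoundedSolvable A) :
    BoundedSolvable (timeReverse A) := by
  rintro w ⟨C, hC⟩
  have hN : 0 ≤ N := (norm_nonneg _).trans (hA 0)
  obtain ⟨v, ⟨M, hM⟩, hv⟩ := h (fun k => -A k (w (-1 - k))) ⟨N * C, fun k => by
    rw [norm_neg]
    exact ((A k : 𝔼 m →L[ℝ] 𝔼 m).le_of_opNorm_le (hA k) _).trans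
      (mul_le_mul_of_nonneg_left (hC _) hN)⟩
  refine ⟨fun j => v (-j), ⟨M, fun j => hM _⟩, fun j => ?_⟩
  have hj : v (-j) = A (-1 - j) (v (-1 - j) - w j) := by
    simpa [map_sub, sub_eq_add_neg] using hv (-1 - j)
  show v (-(j + 1)) = (A (-1 - j)).symm (v (-j)) + w j
  rw [hj, ContinuousLinearEquiv.symm_apply_apply, sub_add_cancel]
  ring_nf

lemma onNat (h : BoundedSolvable A) : BoundedSolvableOnNat A := by
  intro w hw
  obtain ⟨C, hC⟩ := memℓp_infty_iff.1 hw
  obtain ⟨v, ⟨M, hM⟩, hv⟩ := h (fun k => w k.toNat) ⟨C, fun k => hC ⟨_, rfl⟩⟩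
  refine ⟨fun n => v n, memℓp_infty ⟨M, ?_⟩, fun n => by simpa using hv n⟩
  rintro _ ⟨n, rfl⟩
  exact hM n

end BoundedSolvable

section Green

variable {m : ℕ} (A : ℤ → (𝔼 m ≃L[ℝ] 𝔼 m)) (P : ℤ → (𝔼 m →L[ℝ] 𝔼 m))

noncomputable def green (k i : ℤ) : 𝔼 m →L[ℝ] 𝔼 m :=
  if i ≤ k then (Phi A k i).comp (P i) else -(Phi A k i).comp (1 - P i)

lemma green_succ (k i : ℤ) :
    green A P (k + 1) i =
      (A k : 𝔼 m →L[ℝ] 𝔼 m).comp (green A P k i) + if i = k + 1 then 1 else 0 := by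
  rcases lt_trichotomy i (k + 1) with h | rfl | h
  · rw [green, green, if_pos h.le, if_pos (by omega), if_neg h.ne, phi_succ, add_zero,
      ContinuousLinearMap.comp_assoc]
  · rw [green, green, if_pos le_rfl, if_neg (by omega), if_pos rfl, phi_self,
      ContinuousLinearMap.comp_neg, ← ContinuousLinearMap.comp_assoc, ← phi_succ, phi_self]
    ext v : 1
    simp
  · rw [green, green, if_neg (by omega), if_neg (by omega), if_neg h.ne', phi_succ, add_zero,
      ContinuousLinearMap.comp_neg, ContinuousLinearMap.comp_assoc]

lemma exists_bounded_solution_of_green {s : Set ℤ} {C r W : ℝ} (hC : 0 ≤ C) (h0 : 0 ≤ r)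
    (h1 : r < 1) (hG : ∀ k ∈ s, ∀ i ∈ s, ∀ v, ‖green A P k i v‖ ≤ C * r ^ (k - i).natAbs * ‖v‖)
    {g : ℤ → 𝔼 m} (hg : ∀ i, ‖g i‖ ≤ W) (hgs : ∀ i ∉ s, g i = 0) :
    ∃ v : ℤ → 𝔼 m, (∀ k ∈ s, ‖v k‖ ≤ C * W * ((1 + r) / (1 - r))) ∧
      ∀ k ∈ s, v (k + 1) = A k (v k) + g (k + 1) := by
  have hW : 0 ≤ W := (norm_nonneg _).trans (hg 0)
  have hterm (k) (hk : k ∈ s) (i : ℤ) : ‖green A P k i (g i)‖ ≤ C * W * r ^ (k - i).natAbs := by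
    by_cases hi : i ∈ s
    · calc ‖green A P k i (g i)‖ ≤ C * r ^ (k - i).natAbs * ‖g i‖ := hG k hk i hi _
        _ ≤ C * r ^ (k - i).natAbs * W := by gcongr; exact hg i
        _ = C * W * r ^ (k - i).natAbs := by ring
    · rw [hgs i hi, map_zero, norm_zero]
      positivity
  refine ⟨fun k => ∑' i, green A P k i (g i),
    fun k hk => (summable_and_norm_tsum_le_of_le_pow_natAbs k h0 h1 (hterm k hk)).2,
    fun k hk => HasSum.tsum_eq ?_⟩
  have hs := (summable_and_norm_tsum_le_of_le_pow_natAbs k h0 h1 (hterm k hk)).1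
  convert (hs.hasSum.mapL (A k : 𝔼 m →L[ℝ] 𝔼 m)).add (hasSum_ite_eq (k + 1) (g (k + 1))) using 1
  · funext i
    rw [green_succ]
    split_ifs with hi
    · subst hi; simp
    · simp
  · rfl

end Green

section Rays

variable {m : ℕ} {A : ℤ → (𝔼 m ≃L[ℝ] 𝔼 m)}

lemma HyperbolicOnPlusRay.mem_bplus_of_bounded (h : HyperbolicOnPlusRay A) {v : 𝔼 m}
    (hv : ∃ M, ∀ n : ℕ, ‖Phi A n 0 v‖ ≤ M) : v ∈ Bplus A := by
  obtain ⟨C, lam, P, hC, ⟨hlam0, hlam1⟩, -, hcomm, hstable, hunstable⟩ := h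
  obtain ⟨M, hM⟩ := hv
  have hfix : P 0 v = v := by
    have hle (n : ℕ) : ‖v - P 0 v‖ ≤ C * lam ^ n * M := by
      have hsplit : v - P 0 v = Phi A 0 n ((1 - P n) (Phi A n 0 v)) := by
        have := DFunLike.congr_fun (hcomm 0 n le_rfl n.cast_nonneg) (Phi A n 0 v)
        simp only [ContinuousLinearMap.comp_apply, phi_phi_apply, phi_self] at this
        simp [phi_phi_apply, ← this]
      calc ‖v - P 0 v‖ ≤ C * lam ^ ((n : ℤ) - 0).toNat * ‖Phi A n 0 v‖ :=
            hsplit ▸ hunstable 0 n le_rfl n.cast_nonneg _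
        _ ≤ C * lam ^ n * M := by
            rw [sub_zero, Int.toNat_natCast]
            exact mul_le_mul_of_nonneg_left (hM n) (by positivity)
    have hlim : Tendsto (fun n : ℕ => C * lam ^ n * M) atTop (𝓝 0) := by
      simpa using ((tendsto_pow_atTop_nhds_zero_of_lt_one hlam0.le hlam1).const_mul C).mul_const M
    exact (sub_eq_zero.1 (norm_le_zero_iff.1 (ge_of_tendsto' hlim hle))).symm
  have hlim : Tendsto (fun k : ℤ => C * lam ^ k.toNat * ‖v‖) atTop (𝓝 0) := by
    simpa using ((tendsto_pow_toNat_atTop hlam0.le hlam1).const_mul C).mul_const ‖v‖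
  refine squeeze_zero' (.of_forall fun _ => norm_nonneg _) ?_ hlim
  filter_upwards [eventually_ge_atTop 0] with k hk
  simpa [hfix] using hstable k 0 le_rfl hk v

lemma HyperbolicOnMinusRay.of_timeReverse (h : HyperbolicOnPlusRay (timeReverse A)) :
    HyperbolicOnMinusRay A := by
  obtain ⟨C, lam, P, hC, hlam, hidem, hcomm, hstable, hunstable⟩ := h
  have hphi (k l : ℤ) : Phi A k l = Phi (timeReverse A) (-k) (-l) := by
    rw [phi_timeReverse, neg_neg, neg_neg]
  refine ⟨C, lam, fun k => 1 - P (-k), hC, hlam, fun k hk => ?_, fun k l hk hl => ?_,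
    fun k l hlk hk v => ?_, fun k l hkl hl v => ?_⟩
  · exact IsIdempotentElem.one_sub (hidem (-k) (by omega))
  · have := hcomm (-k) (-l) (by omega) (by omega)
    rw [hphi, ContinuousLinearMap.sub_comp, ContinuousLinearMap.comp_sub, this]
    rfl
  · rw [hphi, show (k - l).toNat = (-l - -k).toNat by omega]
    exact hunstable (-k) (-l) (by omega) (by omega) v
  · rw [hphi, sub_sub_cancel, show (l - k).toNat = (-k - -l).toNat by omega]
    exact hstable (-k) (-l) (by omega) (by omega) v

lemma mem_bminus_of_mem_bplus_timeReverse {v : 𝔼 m} (hv : v ∈ Bplus (timeReverse A)) :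
    v ∈ Bminus A := by
  simpa [Bminus, Function.comp_def, phi_timeReverse] using hv.comp tendsto_neg_atBot_atTop

lemma exists_bound_of_mem_bplus {x : 𝔼 m} (hx : x ∈ Bplus A) :
    ∃ M, ∀ k : ℤ, 0 ≤ k → ‖Phi A k 0 x‖ ≤ M := by
  obtain ⟨M, hM⟩ := (hx.comp tendsto_natCast_atTop_atTop).bddAbove_range
  refine ⟨M, fun k hk => ?_⟩
  lift k to ℕ using hk
  exact hM ⟨k, rfl⟩

lemma exists_bound_of_mem_bminus {y : 𝔼 m} (hy : y ∈ Bminus A) :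
    ∃ M, ∀ k : ℤ, k ≤ 0 → ‖Phi A k 0 y‖ ≤ M := by
  obtain ⟨M, hM⟩ :=
    (hy.comp (tendsto_neg_atTop_atBot.comp tendsto_natCast_atTop_atTop)).bddAbove_range
  refine ⟨M, fun k hk => ?_⟩
  obtain ⟨n, rfl⟩ : ∃ n : ℕ, k = -n := ⟨(-k).toNat, by omega⟩
  exact hM ⟨n, rfl⟩

lemma HyperbolicOnPlusRay.exists_bounded_solution (h : HyperbolicOnPlusRay A) (w : ℤ → 𝔼 m)
    (hw : ∃ W, ∀ k, ‖w k‖ ≤ W) :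
    ∃ v : ℤ → 𝔼 m, (∃ M, ∀ k, 0 ≤ k → ‖v k‖ ≤ M) ∧ ∀ k, 0 ≤ k → v (k + 1) = A k (v k) + w k := by
  obtain ⟨C, lam, P, hC, ⟨hlam0, hlam1⟩, -, -, hstable, hunstable⟩ := h
  obtain ⟨W, hW⟩ := hw
  have hgreen (k : ℤ) (hk : k ∈ Set.Ici 0) (i : ℤ) (hi : i ∈ Set.Ici 0) (v : 𝔼 m) :
      ‖green A P k i v‖ ≤ C * lam ^ (k - i).natAbs * ‖v‖ := by
    rw [Set.mem_Ici] at hk hi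
    unfold green
    split_ifs with hik
    · simpa [show (k - i).natAbs = (k - i).toNat by omega] using hstable k i hi hik v
    · rw [neg_apply, norm_neg, ContinuousLinearMap.comp_apply,
        show (k - i).natAbs = (i - k).toNat by omega]
      exact hunstable k i hk (by omega) v
  obtain ⟨v, hvb, hv⟩ := exists_bounded_solution_of_green A P hC.le hlam0.le hlam1 hgreen
    (g := fun i => if 0 ≤ i then w (i - 1) else 0) (W := W)
    (fun i => by split_ifs; exacts [hW _, by simpa using (norm_nonneg _).trans (hW 0)])
    (fun i hi => if_neg hi)
  exact ⟨v, ⟨_, hvb⟩, fun k hk => by simpa [show 0 ≤ k + 1 by omega] using hv k hk⟩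

lemma HyperbolicOnMinusRay.exists_bounded_solution (h : HyperbolicOnMinusRay A) (w : ℤ → 𝔼 m)
    (hw : ∃ W, ∀ k, ‖w k‖ ≤ W) :
    ∃ v : ℤ → 𝔼 m, (∃ M, ∀ k, k ≤ 0 → ‖v k‖ ≤ M) ∧ ∀ k, k < 0 → v (k + 1) = A k (v k) + w k := by
  obtain ⟨C, lam, Q, hC, ⟨hlam0, hlam1⟩, -, -, hstable, hunstable⟩ := h
  obtain ⟨W, hW⟩ := hw
  have hgreen (k : ℤ) (hk : k ∈ Set.Iic 0) (i : ℤ) (hi : i ∈ Set.Iic 0) (v : 𝔼 m) :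
      ‖green A Q k i v‖ ≤ C * lam ^ (k - i).natAbs * ‖v‖ := by
    rw [Set.mem_Iic] at hk hi
    unfold green
    split_ifs with hik
    · simpa [show (k - i).natAbs = (k - i).toNat by omega] using hstable k i hik hk v
    · rw [neg_apply, norm_neg, ContinuousLinearMap.comp_apply,
        show (k - i).natAbs = (i - k).toNat by omega]
      exact hunstable k i (by omega) hi v
  obtain ⟨v, hvb, hv⟩ := exists_bounded_solution_of_green A Q hC.le hlam0.le hlam1 hgreen
    (g := fun i => if i ≤ 0 then w (i - 1) else 0) (W := W)
    (fun i => by split_ifs; exacts [hW _, by simpa using (norm_nonneg _).trans (hW 0)])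
    (fun i hi => if_neg hi)
  exact ⟨v, ⟨_, hvb⟩, fun k hk => by simpa [show k + 1 ≤ 0 by omega] using hv k hk.le⟩

end Rays

variable {m : ℕ} in
theorem BoundedSolvable.of_hyperbolic_of_transverse {A : ℤ → (𝔼 m ≃L[ℝ] 𝔼 m)}
    (hplus : HyperbolicOnPlusRay A) (hminus : HyperbolicOnMinusRay A)
    (htrans : ∀ u : 𝔼 m, ∃ x ∈ Bplus A, ∃ y ∈ Bminus A, u = x + y) : BoundedSolvable A := by
  intro w hw
  obtain ⟨vp, ⟨Mp, hMp⟩, hvp⟩ := hplus.exists_bounded_solution w hw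
  obtain ⟨vm, ⟨Mm, hMm⟩, hvm⟩ := hminus.exists_bounded_solution w hw
  obtain ⟨x, hx, y, hy, hxy⟩ := htrans (vp 0 - vm 0)
  obtain ⟨Mx, hMx⟩ := exists_bound_of_mem_bplus hx
  obtain ⟨My, hMy⟩ := exists_bound_of_mem_bminus hy
  -- glue the two half-line solutions; the jump `vp 0 - vm 0` is absorbed by `x` and `y`
  refine ⟨fun k => if 0 ≤ k then vp k - Phi A k 0 x else vm k + Phi A k 0 y,
    ⟨max (Mp + Mx) (Mm + My), fun k => ?_⟩, fun k => ?_⟩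
  · dsimp only
    split_ifs with hk
    · exact le_max_of_le_left ((norm_sub_le _ _).trans (add_le_add (hMp k hk) (hMx k hk)))
    · exact le_max_of_le_right
        ((norm_add_le _ _).trans (add_le_add (hMm k (by omega)) (hMy k (by omega))))
  · dsimp only
    rcases lt_trichotomy k (-1) with hk | rfl | hk
    · rw [if_neg (by omega), if_neg (by omega), hvm k (by omega), phi_succ_apply, map_add]
      abel
    · have hm := hvm (-1) (by norm_num)
      have hy : A (-1) (Phi A (-1) 0 y) = y := by rw [← phi_succ_apply]; norm_num
      rw [show (-1 : ℤ) + 1 = 0 by norm_num] at hm ⊢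
      rw [if_pos le_rfl, if_neg (by norm_num), phi_self_apply, map_add, hy,
        sub_eq_iff_eq_add.1 hxy, hm]
      abel
    · rw [if_pos (by omega), if_pos (by omega), hvp k (by omega), phi_succ_apply, map_sub]
      abel

section HalfLine

variable {m : ℕ} (A : ℤ → (𝔼 m ≃L[ℝ] 𝔼 m))

noncomputable def boundedSubspace : Submodule ℝ (𝔼 m) where
  carrier := {ξ | Memℓp (fun n : ℕ => Phi A n 0 ξ) ∞}
  add_mem' {ξ η} (hξ : Memℓp _ ∞) (hη : Memℓp _ ∞) := by
    show Memℓp (fun n : ℕ => Phi A n 0 (ξ + η)) ∞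
    simp only [map_add]
    exact hξ.add hη
  zero_mem' := by
    show Memℓp (fun n : ℕ => Phi A n 0 0) ∞
    simp only [map_zero]
    exact zero_memℓp
  smul_mem' c ξ (hξ : Memℓp _ ∞) := by
    show Memℓp (fun n : ℕ => Phi A n 0 (c • ξ)) ∞
    simp only [map_smul]
    exact hξ.const_smul c

lemma mem_boundedSubspace {ξ : 𝔼 m} :
    ξ ∈ boundedSubspace A ↔ Memℓp (fun n : ℕ => Phi A n 0 ξ) ∞ := Iff.rfl

lemma exists_projection_boundedSubspace :
    ∃ Pr : 𝔼 m →L[ℝ] 𝔼 m, (∀ ξ, Pr ξ ∈ boundedSubspace A) ∧ ∀ ξ ∈ boundedSubspace A, Pr ξ = ξ := by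
  obtain ⟨f, hf⟩ := Submodule.ClosedComplemented.of_finiteDimensional (boundedSubspace A)
  exact ⟨(boundedSubspace A).subtypeL.comp f, fun ξ => (f ξ).2,
    fun ξ hξ => congrArg Subtype.val (hf ⟨ξ, hξ⟩)⟩

variable {A}

lemma eq_zero_of_forall_succ_of_proj_eq_zero {Pr : 𝔼 m →L[ℝ] 𝔼 m}
    (hPr_fix : ∀ ξ ∈ boundedSubspace A, Pr ξ = ξ) {d : ℕ → 𝔼 m} (hd : Memℓp d ∞)
    (hrec : ∀ n : ℕ, d (n + 1) = A n (d n)) (h0 : Pr (d 0) = 0) : d = 0 := by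
  have hphi := eq_phi_of_forall_succ A hrec
  have hmem : d 0 ∈ boundedSubspace A := by
    simpa only [mem_boundedSubspace, ← hphi] using hd
  have hd0 : d 0 = 0 := (hPr_fix _ hmem).symm.trans h0
  funext n
  rw [hphi n, hd0, map_zero, Pi.zero_apply]

variable (A) in
def IsSolutionBound (Pr : 𝔼 m →L[ℝ] 𝔼 m) (K : ℝ) : Prop :=
  ∀ (w y : ℕ → 𝔼 m) (W : ℝ), (∀ n, ‖w n‖ ≤ W) → Memℓp y ∞ →
    (∀ n : ℕ, y (n + 1) = A n (y n) + w n) → Pr (y 0) = 0 → ∀ n, ‖y n‖ ≤ K * W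

variable (A) in
noncomputable def solutionGraph (Pr : 𝔼 m →L[ℝ] 𝔼 m) :
    Submodule ℝ (lp (fun _ : ℕ => 𝔼 m) ∞ × lp (fun _ : ℕ => 𝔼 m) ∞) :=
  let ℓ := lp (fun _ : ℕ => 𝔼 m) ∞
  let ev (n : ℕ) : ℓ →L[ℝ] 𝔼 m := lp.evalCLM ℝ (fun _ : ℕ => 𝔼 m) ∞ n
  let eqn (n : ℕ) : ℓ × ℓ →L[ℝ] 𝔼 m := (ev (n + 1)).comp (.snd ℝ ℓ ℓ) -
    (A n : 𝔼 m →L[ℝ] 𝔼 m).comp ((ev n).comp (.snd ℝ ℓ ℓ)) - (ev n).comp (.fst ℝ ℓ ℓ)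
  let init : ℓ × ℓ →L[ℝ] 𝔼 m := Pr.comp ((ev 0).comp (.snd ℝ ℓ ℓ))
  (⨅ n : ℕ, LinearMap.ker (eqn n : ℓ × ℓ →ₗ[ℝ] 𝔼 m)) ⊓ LinearMap.ker (init : ℓ × ℓ →ₗ[ℝ] 𝔼 m)

lemma mem_solutionGraph {Pr : 𝔼 m →L[ℝ] 𝔼 m}
    {p : lp (fun _ : ℕ => 𝔼 m) ∞ × lp (fun _ : ℕ => 𝔼 m) ∞} :
    p ∈ solutionGraph A Pr ↔ (∀ n : ℕ, p.2 (n + 1) = A n (p.2 n) + p.1 n) ∧ Pr (p.2 0) = 0 := by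
  simp [solutionGraph, Submodule.mem_iInf, lp.evalCLM, sub_eq_zero, sub_sub]

lemma isClosed_solutionGraph (Pr : 𝔼 m →L[ℝ] 𝔼 m) :
    IsClosed (solutionGraph A Pr : Set (lp (fun _ : ℕ => 𝔼 m) ∞ × lp (fun _ : ℕ => 𝔼 m) ∞)) := by
  simp only [solutionGraph, Submodule.coe_inf, Submodule.coe_iInf]
  exact (isClosed_iInter fun n => ContinuousLinearMap.isClosed_ker _).inter
    (ContinuousLinearMap.isClosed_ker _)

lemma exists_isSolutionBound {Pr : 𝔼 m →L[ℝ] 𝔼 m} (hPr_mem : ∀ ξ, Pr ξ ∈ boundedSubspace A)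
    (hPr_fix : ∀ ξ ∈ boundedSubspace A, Pr ξ = ξ)
    (hsolve : BoundedSolvableOnNat A) :
    ∃ K, 0 < K ∧ IsSolutionBound A Pr K := by
  set ℓ := lp (fun _ : ℕ => 𝔼 m) ∞
  set G := solutionGraph A Pr
  have : CompleteSpace G := (isClosed_solutionGraph Pr).completeSpace_coe
  let π : G →L[ℝ] ℓ := (ContinuousLinearMap.fst ℝ ℓ ℓ).comp G.subtypeL
  have hsurj : Function.Surjective π := by
    intro w
    obtain ⟨v, hv, hrec⟩ := hsolve w (lp.memℓp w)
    -- subtract the bounded homogeneous solution through `Pr (v 0)`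
    let y : ℓ := ⟨fun n => v n - Phi A n 0 (Pr (v 0)), hv.sub (hPr_mem (v 0))⟩
    refine ⟨⟨(w, y), mem_solutionGraph.2 ⟨fun n => ?_, ?_⟩⟩, rfl⟩
    · simp only [y, hrec, phi_natCast_succ_apply, map_sub]
      abel
    · simp [y, hPr_fix _ (hPr_mem _)]
  obtain ⟨K, hK, hpre⟩ := ContinuousLinearMap.exists_preimage_norm_le π hsurj
  refine ⟨K, hK, fun w y W hw hy hrec h0 n => ?_⟩
  have hW : 0 ≤ W := (norm_nonneg _).trans (hw 0)
  let w' : ℓ := ⟨w, memℓp_infty ⟨W, Set.forall_mem_range.2 hw⟩⟩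
  let y' : ℓ := ⟨y, hy⟩
  obtain ⟨p, hpw, hpK⟩ := hpre w'
  have hdiff := G.sub_mem (mem_solutionGraph.2 ⟨hrec, h0⟩ : (w', y') ∈ G) p.2
  -- normalised solutions are unique, so `y'` is the preimage of `w'` with controlled norm
  have hy' : y' = (p : ℓ × ℓ).2 := by
    have hfst : (p : ℓ × ℓ).1 = w' := hpw
    rw [mem_solutionGraph] at hdiff
    rw [← sub_eq_zero]
    refine lp.ext (eq_zero_of_forall_succ_of_proj_eq_zero hPr_fix (lp.memℓp _) (fun n => ?_) ?_)
    · simpa [hfst] using hdiff.1 n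
    · simpa using hdiff.2
  calc ‖y n‖ ≤ ‖y'‖ := lp.norm_apply_le_norm ENNReal.top_ne_zero y' n
    _ ≤ ‖p‖ := hy' ▸ norm_snd_le (p : ℓ × ℓ)
    _ ≤ K * ‖w'‖ := hpK
    _ ≤ K * W := by gcongr; exact lp.norm_le_of_forall_le hW hw

end HalfLine

section Estimates

variable {m : ℕ} {A : ℤ → (𝔼 m ≃L[ℝ] 𝔼 m)} {Pr : 𝔼 m →L[ℝ] 𝔼 m} {K : ℝ}

lemma IsSolutionBound.norm_smul_le (hK : IsSolutionBound A Pr K) {z : ℕ → 𝔼 m}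
    (hz : ∀ n : ℕ, z (n + 1) = A n (z n)) {c : ℕ → ℝ} {W : ℝ}
    (hw : ∀ n, ‖(c (n + 1) - c n) • z (n + 1)‖ ≤ W) (hb : Memℓp (fun n => c n • z n) ∞)
    (h0 : Pr (c 0 • z 0) = 0) (n : ℕ) : ‖c n • z n‖ ≤ K * W :=
  hK _ (fun n => c n • z n) W hw hb (fun n => by rw [map_smul, ← hz, sub_smul]; abel) h0 n

/-- Perron's test on the stable side: force with `‖Phi A i 0 ζ‖⁻¹ • Phi A (i + 1) 0 ζ` for
`i ∈ [l, k)`. -/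
lemma IsSolutionBound.norm_mul_sum_inv_le_of_mem (hK : IsSolutionBound A Pr K) {N : ℝ}
    (hA : ∀ n : ℕ, ‖(A n : 𝔼 m →L[ℝ] 𝔼 m)‖ ≤ N) {ζ : 𝔼 m} (hζ : ζ ∈ boundedSubspace A)
    (hζ0 : ζ ≠ 0) (l k : ℕ) :
    ‖Phi A k 0 ζ‖ * ∑ i ∈ Finset.Ico l k, ‖Phi A i 0 ζ‖⁻¹ ≤ K * N := by
  set x : ℕ → ℝ := fun j => ‖Phi A j 0 ζ‖
  have hx (j : ℕ) : 0 < x j := norm_pos_iff.2 (phi_apply_ne_zero A _ _ hζ0)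
  obtain ⟨M, hM⟩ := memℓp_infty_iff.1 hζ
  set c : ℕ → ℝ := fun n => ∑ i ∈ Finset.range n, if i ∈ Finset.Ico l k then (x i)⁻¹ else 0
  have hc (n : ℕ) : c n = ∑ i ∈ Finset.range n ∩ Finset.Ico l k, (x i)⁻¹ :=
    Finset.sum_ite_mem _ _ _
  have hc_nonneg (n : ℕ) : 0 ≤ c n := by
    rw [hc]; exact Finset.sum_nonneg fun i _ => (inv_pos.2 (hx i)).le
  have hc_le (n : ℕ) : c n ≤ ∑ i ∈ Finset.Ico l k, (x i)⁻¹ := by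
    rw [hc]
    exact Finset.sum_le_sum_of_subset_of_nonneg Finset.inter_subset_right
      fun i _ _ => (inv_pos.2 (hx i)).le
  have htest := hK.norm_smul_le (z := fun n => Phi A n 0 ζ)
    (fun n => phi_natCast_succ_apply A n 0 ζ)
    (c := c) (W := N) (fun n => ?_) (memℓp_infty ⟨(∑ i ∈ Finset.Ico l k, (x i)⁻¹) * M, ?_⟩)
    (by simp [c]) k
  · rwa [norm_smul, Real.norm_eq_abs, abs_of_nonneg (hc_nonneg k), hc,
      Finset.inter_eq_right.2 (fun i hi => Finset.mem_range.2 (Finset.mem_Ico.1 hi).2),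
      mul_comm] at htest
  · simp only [c, Finset.sum_range_succ, add_sub_cancel_left]
    split_ifs
    · rw [norm_smul, phi_natCast_succ_apply, norm_inv, norm_norm]
      calc (x n)⁻¹ * ‖A n (Phi A n 0 ζ)‖ ≤ (x n)⁻¹ * (N * x n) := by
            gcongr; exact (A n : 𝔼 m →L[ℝ] 𝔼 m).le_of_opNorm_le (hA n) _
        _ = N := by field_simp [(hx n).ne']
    · rw [zero_smul, norm_zero]
      exact (norm_nonneg _).trans (hA 0)
  · rintro _ ⟨n, rfl⟩
    dsimp only
    rw [norm_smul, Real.norm_eq_abs, abs_of_nonneg (hc_nonneg n)]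
    exact mul_le_mul (hc_le n) (hM ⟨n, rfl⟩) (norm_nonneg _) ((hc_nonneg n).trans (hc_le n))

/-- Perron's test on the unstable side: force with `-‖Phi A (i + 1) l η‖⁻¹ • Phi A (i + 1) l η`
for `i ∈ [k, l)`. -/
lemma IsSolutionBound.norm_mul_sum_inv_le_of_proj_eq_zero (hK : IsSolutionBound A Pr K) {l : ℕ}
    {η : 𝔼 m} (hη : Pr (Phi A 0 l η) = 0) (hη0 : η ≠ 0) (k : ℕ) :
    ‖Phi A k l η‖ * ∑ i ∈ Finset.Ico k l, ‖Phi A (i + 1 : ℕ) l η‖⁻¹ ≤ K := by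
  set x : ℕ → ℝ := fun j => ‖Phi A j l η‖
  have hx (j : ℕ) : 0 < x j := norm_pos_iff.2 (phi_apply_ne_zero A _ _ hη0)
  set D := ∑ i ∈ Finset.Ico k l, (x (i + 1))⁻¹
  set c : ℕ → ℝ := fun n =>
    D - ∑ i ∈ Finset.range n, if i ∈ Finset.Ico k l then (x (i + 1))⁻¹ else 0
  have hc (n : ℕ) : c n = D - ∑ i ∈ Finset.range n ∩ Finset.Ico k l, (x (i + 1))⁻¹ := by
    simp only [c, Finset.sum_ite_mem]
  have htest := hK.norm_smul_le (z := fun n => Phi A n l η)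
    (fun n => phi_natCast_succ_apply A n l η)
    (c := c) (W := 1) (fun n => ?_) (Memℓp.of_forall_ge_eq zero_memℓp l fun n hn => ?_)
    (by simp [map_smul, hη]) k
  · have hD : 0 ≤ D := Finset.sum_nonneg fun i _ => (inv_pos.2 (hx _)).le
    rwa [norm_smul, hc, Finset.disjoint_iff_inter_eq_empty.1 ?_, Finset.sum_empty, sub_zero,
      Real.norm_eq_abs, abs_of_nonneg hD, mul_comm, mul_one] at htest
    exact Finset.disjoint_left.2 fun i hi hi' => by
      have := Finset.mem_range.1 hi
      have := (Finset.mem_Ico.1 hi').1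
      omega
  · simp only [c, Finset.sum_range_succ, sub_add_eq_sub_sub, sub_sub_cancel_left]
    split_ifs
    · rw [neg_smul, norm_neg, norm_smul, norm_inv, norm_norm, inv_mul_cancel₀ (hx _).ne']
    · simp only [neg_zero, zero_smul, norm_zero, zero_le_one]
  · rw [hc, Finset.inter_eq_right.2 (fun i hi => Finset.mem_range.2 (by
      have := (Finset.mem_Ico.1 hi).2; omega)), sub_self, zero_smul, Pi.zero_apply]

lemma IsSolutionBound.norm_phi_le_of_mem (hK : IsSolutionBound A Pr K) (hK0 : 0 < K) {N : ℝ}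
    (hN : 1 ≤ N) (hA : ∀ n : ℕ, ‖(A n : 𝔼 m →L[ℝ] 𝔼 m)‖ ≤ N) {ζ : 𝔼 m}
    (hζ : ζ ∈ boundedSubspace A) {l k : ℕ} (hlk : l ≤ k) :
    ‖Phi A k 0 ζ‖ ≤ (K * N + 1) * (K * N / (K * N + 1)) ^ (k - l) * ‖Phi A l 0 ζ‖ := by
  rcases eq_or_ne ζ 0 with rfl | hζ0
  · simp
  have := le_pow_mul_of_mul_sum_inv_le (x := fun j => ‖Phi A (l + j : ℕ) 0 ζ‖) (K := K * N)
    (fun j => norm_pos_iff.2 (phi_apply_ne_zero A _ _ hζ0)) (by positivity) (n := k - l)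
    fun j _ _ => by
      simpa [Finset.sum_Ico_eq_sum_range] using hK.norm_mul_sum_inv_le_of_mem hA hζ hζ0 l (l + j)
  simpa [Nat.add_sub_cancel' hlk] using this

lemma IsSolutionBound.norm_phi_le_of_proj_eq_zero (hK : IsSolutionBound A Pr K) (hK0 : 0 < K)
    {N : ℝ} (hN : 1 ≤ N) {l : ℕ} {η : 𝔼 m} (hη : Pr (Phi A 0 l η) = 0) {k : ℕ} (hkl : k ≤ l) :
    ‖Phi A k l η‖ ≤ (K * N + 1) * (K * N / (K * N + 1)) ^ (l - k) * ‖η‖ := by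
  rcases eq_or_ne η 0 with rfl | hη0
  · simp
  have := le_pow_mul_of_mul_sum_inv_le (x := fun j => ‖Phi A (l - j : ℕ) l η‖) (K := K * N)
    (fun j => norm_pos_iff.2 (phi_apply_ne_zero A _ _ hη0)) (by positivity) (n := l - k)
    fun j _ hj => by
      rw [← sum_Ico_sub_eq_sum_range (fun i => ‖Phi A (i : ℕ) l η‖⁻¹) (by omega : j ≤ l)]
      exact (hK.norm_mul_sum_inv_le_of_proj_eq_zero hη hη0 (l - j)).trans
        (le_mul_of_one_le_right hK0.le hN)
  simpa [Nat.sub_sub_self hkl] using this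

end Estimates

section Projections

variable {m : ℕ} {A : ℤ → (𝔼 m ≃L[ℝ] 𝔼 m)} {Pr : 𝔼 m →L[ℝ] 𝔼 m}

variable (A) in
noncomputable def transportedProj (Pr : 𝔼 m →L[ℝ] 𝔼 m) (k : ℤ) : 𝔼 m →L[ℝ] 𝔼 m :=
  (Phi A k 0).comp (Pr.comp (Phi A 0 k))

lemma transportedProj_apply (k : ℤ) (v : 𝔼 m) :
    transportedProj A Pr k v = Phi A k 0 (Pr (Phi A 0 k v)) := rfl

lemma transportedProj_comp_self (hPr : ∀ ξ, Pr (Pr ξ) = Pr ξ) (k : ℤ) :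
    (transportedProj A Pr k).comp (transportedProj A Pr k) = transportedProj A Pr k := by
  ext1 v
  simp [transportedProj_apply, phi_phi_apply, hPr]

lemma transportedProj_comp_phi (k l : ℤ) :
    (transportedProj A Pr k).comp (Phi A k l) = (Phi A k l).comp (transportedProj A Pr l) := by
  ext1 v
  simp [transportedProj_apply, phi_phi_apply]

lemma proj_phi_sub_transportedProj (hPr : ∀ ξ, Pr (Pr ξ) = Pr ξ) (l : ℤ) (v : 𝔼 m) :
    Pr (Phi A 0 l (v - transportedProj A Pr l v)) = 0 := by
  simp [transportedProj_apply, phi_phi_apply, hPr]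

lemma IsSolutionBound.norm_transportedProj_apply_le {K : ℝ} (hK : IsSolutionBound A Pr K)
    (hPr_mem : ∀ ξ, Pr ξ ∈ boundedSubspace A) (hPr : ∀ ξ, Pr (Pr ξ) = Pr ξ) (n : ℕ) (u : 𝔼 m) :
    ‖transportedProj A Pr n u‖ ≤ max K ‖Pr‖ * ‖u‖ := by
  rcases n.eq_zero_or_pos with rfl | hn
  · simpa [transportedProj_apply] using
      (Pr.le_opNorm u).trans (by gcongr; exact le_max_right _ _)
  -- the bounded solution forced by `u` at time `n - 1` with `Pr (y 0) = 0`
  let y : ℕ → 𝔼 m := fun j => if n ≤ j then Phi A j n (transportedProj A Pr n u)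
    else -Phi A j n (u - transportedProj A Pr n u)
  have hy := hK (fun j => if j + 1 = n then u else 0) y ‖u‖ (fun j => by split_ifs <;> simp)
    (Memℓp.of_forall_ge_eq (hPr_mem (Phi A 0 n u)) n fun j hj => by
      simp [y, if_pos hj, transportedProj_apply, phi_phi_apply])
    (fun j => ?_) (by simp only [y]; rw [if_neg hn.not_ge, map_neg, Nat.cast_zero,
      proj_phi_sub_transportedProj hPr, neg_zero]) n
  · simp only [y, le_refl, if_true, phi_self_apply] at hy
    exact hy.trans (by gcongr; exact le_max_left _ _)
  · simp only [y]
    rcases lt_trichotomy (j + 1) n with h | h | h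
    · rw [if_neg (by omega), if_neg (by omega), if_neg h.ne, phi_natCast_succ_apply, map_neg,
        add_zero]
    · rw [if_pos h.ge, if_neg (by omega), if_pos h, map_neg, ← phi_natCast_succ_apply, h]
      simp only [phi_self_apply]
      abel
    · rw [if_pos (by omega), if_pos (by omega), if_neg h.ne', phi_natCast_succ_apply, add_zero]

end Projections

variable {m : ℕ} in
theorem hyperbolicOnPlusRay_of_boundedSolvableOnNat {A : ℤ → (𝔼 m ≃L[ℝ] 𝔼 m)} {N : ℝ}
    (hA : ∀ n : ℕ, ‖(A n : 𝔼 m →L[ℝ] 𝔼 m)‖ ≤ N)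
    (hsolve : BoundedSolvableOnNat A) :
    HyperbolicOnPlusRay A := by
  obtain ⟨Pr, hPr_mem, hPr_fix⟩ := exists_projection_boundedSubspace A
  have hPr (ξ : 𝔼 m) : Pr (Pr ξ) = Pr ξ := hPr_fix _ (hPr_mem ξ)
  obtain ⟨K, hK0, hK⟩ := exists_isSolutionBound hPr_mem hPr_fix hsolve
  have hA' (n : ℕ) : ‖(A n : 𝔼 m →L[ℝ] 𝔼 m)‖ ≤ max N 1 := (hA n).trans (le_max_left _ _)
  have hN : 1 ≤ max N 1 := le_max_right _ _
  set L := K * max N 1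
  set M := max K ‖Pr‖
  have hM : 0 ≤ M := hK0.le.trans (le_max_left _ _)
  have hL : 0 < L := by positivity
  refine ⟨(L + 1) * (1 + M), L / (L + 1), transportedProj A Pr, by positivity,
    ⟨by positivity, (div_lt_one (by positivity)).2 (by linarith)⟩,
    fun k _ => transportedProj_comp_self hPr k, fun k l _ _ => transportedProj_comp_phi k l,
    fun k l hl hlk v => ?_, fun k l hk hkl v => ?_⟩
  · lift l to ℕ using hl
    lift k to ℕ using hlk.trans' (Nat.cast_nonneg l)
    rw [show ((k : ℤ) - l).toNat = k - l by omega]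
    calc ‖Phi A k l (transportedProj A Pr l v)‖ = ‖Phi A k 0 (Pr (Phi A 0 l v))‖ := by
          rw [transportedProj_apply, phi_phi_apply]
      _ ≤ (L + 1) * (L / (L + 1)) ^ (k - l) * ‖transportedProj A Pr l v‖ :=
          hK.norm_phi_le_of_mem hK0 hN hA' (hPr_mem _) (by omega)
      _ ≤ (L + 1) * (L / (L + 1)) ^ (k - l) * ((1 + M) * ‖v‖) := by
          gcongr
          exact (hK.norm_transportedProj_apply_le hPr_mem hPr l v).trans (by gcongr; linarith)
      _ = (L + 1) * (1 + M) * (L / (L + 1)) ^ (k - l) * ‖v‖ := by ring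
  · lift k to ℕ using hk
    lift l to ℕ using hkl.trans' (Nat.cast_nonneg k)
    rw [show ((l : ℤ) - k).toNat = l - k by omega]
    calc ‖Phi A k l ((1 - transportedProj A Pr l) v)‖
        ≤ (L + 1) * (L / (L + 1)) ^ (l - k) * ‖v - transportedProj A Pr l v‖ :=
          hK.norm_phi_le_of_proj_eq_zero hK0 hN (proj_phi_sub_transportedProj hPr l v) (by omega)
      _ ≤ (L + 1) * (L / (L + 1)) ^ (l - k) * ((1 + M) * ‖v‖) := by
          gcongr
          refine (norm_sub_le _ _).trans ?_
          linarith [hK.norm_transportedProj_apply_le hPr_mem hPr l v]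
      _ = (L + 1) * (1 + M) * (L / (L + 1)) ^ (l - k) * ‖v‖ := by ring

variable {m : ℕ} in
lemma BoundedSolvable.exists_add_mem_bplus_bminus {A : ℤ → (𝔼 m ≃L[ℝ] 𝔼 m)}
    (h : BoundedSolvable A) (hplus : HyperbolicOnPlusRay A)
    (hrev : HyperbolicOnPlusRay (timeReverse A)) (u : 𝔼 m) :
    ∃ x ∈ Bplus A, ∃ y ∈ Bminus A, u = x + y := by
  obtain ⟨v, ⟨C, hC⟩, hv⟩ := h (fun k => if k = -1 then u else 0)
    ⟨‖u‖, fun k => by split_ifs <;> simp⟩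
  refine ⟨v 0, hplus.mem_bplus_of_bounded ⟨C, fun n => ?_⟩, u - v 0,
    mem_bminus_of_mem_bplus_timeReverse (hrev.mem_bplus_of_bounded ⟨‖u‖ + C, fun n => ?_⟩),
    by abel⟩
  · have hphi := eq_phi_of_forall_succ A (d := fun n : ℕ => v n) (fun n => by
      simpa [show (n : ℤ) ≠ -1 by omega] using hv n) n
    rw [Nat.cast_zero] at hphi
    exact hphi ▸ hC n
  · let d : ℕ → 𝔼 m := fun n => (if n = 0 then u else 0) - v (-n)
    have hd (n : ℕ) : d (n + 1) = timeReverse A n (d n) := by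
      have hw : (if -1 - (n : ℤ) = -1 then u else 0) = if n = 0 then u else 0 := by
        simp
      have hdn : d n = -A (-1 - n) (v (-1 - n)) := by
        simp only [d]
        rw [show -(n : ℤ) = -1 - n + 1 by ring, hv, hw]
        abel
      simp only [timeReverse]
      rw [hdn, map_neg, ContinuousLinearEquiv.symm_apply_apply]
      simp only [d, if_neg n.succ_ne_zero, zero_sub, Nat.cast_succ, neg_add']
      ring_nf
    calc ‖Phi (timeReverse A) n 0 (u - v 0)‖ = ‖d n‖ := by
          rw [eq_phi_of_forall_succ (timeReverse A) hd n]; simp [d]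
      _ ≤ ‖u‖ + C := (norm_sub_le _ _).trans (add_le_add (by split_ifs <;> simp) (hC _))

variable {m : ℕ} in
theorem BoundedSolvable.hyperbolic_and_transverse {A : ℤ → (𝔼 m ≃L[ℝ] 𝔼 m)} {N : ℝ}
    (hA : ∀ k : ℤ, ‖(A k : 𝔼 m →L[ℝ] 𝔼 m)‖ ≤ N)
    (hAinv : ∀ k : ℤ, ‖((A k).symm : 𝔼 m →L[ℝ] 𝔼 m)‖ ≤ N) (h : BoundedSolvable A) :
    HyperbolicOnPlusRay A ∧ HyperbolicOnMinusRay A ∧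
      ∀ u : 𝔼 m, ∃ x ∈ Bplus A, ∃ y ∈ Bminus A, u = x + y := by
  have hplus := hyperbolicOnPlusRay_of_boundedSolvableOnNat (fun n => hA n) h.onNat
  have hrev := hyperbolicOnPlusRay_of_boundedSolvableOnNat (A := timeReverse A)
    (fun n => hAinv (-1 - n)) (h.reverse hA).onNat
  exact ⟨hplus, HyperbolicOnMinusRay.of_timeReverse hrev,
    h.exists_add_mem_bplus_bminus hplus hrev⟩

theorem pliss_bounded_solvability_iff_hyperbolic_and_transverse_general
    {m : ℕ} (A : ℤ → (EuclideanSpace ℝ (Fin m) ≃L[ℝ] EuclideanSpace ℝ (Fin m)))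
    (N : ℝ)
    (hA : ∀ k : ℤ, ‖(A k : EuclideanSpace ℝ (Fin m) →L[ℝ] EuclideanSpace ℝ (Fin m))‖ ≤ N)
    (hAinv : ∀ k : ℤ,
      ‖((A k).symm : EuclideanSpace ℝ (Fin m) →L[ℝ] EuclideanSpace ℝ (Fin m))‖ ≤ N) :
    (∀ w : ℤ → EuclideanSpace ℝ (Fin m), (∃ C : ℝ, ∀ k : ℤ, ‖w k‖ ≤ C) →
        ∃ v : ℤ → EuclideanSpace ℝ (Fin m), (∃ C : ℝ, ∀ k : ℤ, ‖v k‖ ≤ C) ∧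
          ∀ k : ℤ, v (k + 1) = A k (v k) + w k) ↔
      (HyperbolicOnPlusRay A ∧ HyperbolicOnMinusRay A ∧
        ∀ u : EuclideanSpace ℝ (Fin m),
          ∃ x ∈ Bplus A, ∃ y ∈ Bminus A, u = x + y) := by
  constructor
  · exact BoundedSolvable.hyperbolic_and_transverse hA hAinv
  · rintro ⟨hplus, hminus, htrans⟩
    exact BoundedSolvable.of_hyperbolic_of_transverse hplus hminus htrans

/-- **Pliss' theorem.** For a sequence of linear isomorphisms of `ℝ^m` with uniformly
bounded norms and inverse norms, solvability in bounded sequences of the inhomogeneous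
difference equation `v_{k+1} = A_k v_k + w_k` for every bounded `{w_k}` is equivalent to
hyperbolicity of `{A_k}` on both rays `[0,+∞)`, `(-∞,0]` together with transversality
`B⁺(𝒜) + B⁻(𝒜) = ℝ^m`. -/
theorem pliss_bounded_solvability_iff_hyperbolic_and_transverse
    {m : ℕ} (A : ℤ → (EuclideanSpace ℝ (Fin m) ≃L[ℝ] EuclideanSpace ℝ (Fin m)))
    (N : ℝ) (hN : 0 < N)
    (hA : ∀ k : ℤ, ‖(A k : EuclideanSpace ℝ (Fin m) →L[ℝ] EuclideanSpace ℝ (Fin m))‖ ≤ N)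
    (hAinv : ∀ k : ℤ,
      ‖((A k).symm : EuclideanSpace ℝ (Fin m) →L[ℝ] EuclideanSpace ℝ (Fin m))‖ ≤ N) :
    (∀ w : ℤ → EuclideanSpace ℝ (Fin m), (∃ C : ℝ, ∀ k : ℤ, ‖w k‖ ≤ C) →
        ∃ v : ℤ → EuclideanSpace ℝ (Fin m), (∃ C : ℝ, ∀ k : ℤ, ‖v k‖ ≤ C) ∧
          ∀ k : ℤ, v (k + 1) = A k (v k) + w k) ↔
      (HyperbolicOnPlusRay A ∧ HyperbolicOnMinusRay A ∧
        ∀ u : EuclideanSpace ℝ (Fin m),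
          ∃ x ∈ Bplus A, ∃ y ∈ Bminus A, u = x + y) :=
  pliss_bounded_solvability_iff_hyperbolic_and_transverse_general A N hA hAinv
end

section
/- Let {A_k : ℝ^m → ℝ^m, k ∈ ℤ} be a sequence of linear isomorphisms for which there is a constant N > 0 with ‖A_k‖ ≤ N and ‖A_k⁻¹‖ ≤ N for all k. Assume that for every bounded sequence {w_k ∈ ℝ^m, k ∈ ℤ} there exists a bounded sequence {v_k ∈ ℝ^m, k ∈ ℤ} such that v_{k+1} = A_k v_k + w_k for all k ∈ ℤ. Then B⁺(𝒜) + B⁻(𝒜) = ℝ^m, i.e. every vector of ℝ^m is the sum of a vector of B⁺(𝒜) and a vector of B⁻(𝒜). -/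
/-!
The difference operator `v ↦ (v (k + 1) - A k (v k))_k` is bounded and, by hypothesis, surjective
on `ℓ∞(ℤ, ℝᵐ)`, so by the open mapping theorem bounded forcings have solutions bounded by a
uniform multiple `K` of their size. Perron's argument then shows that on each half-line every
bounded solution `z` of the homogeneous equation decays like `1 / n`: forcing with the
normalised orbit up to time `n` yields a solution with value `(∑_{j < n} ‖z (j + 1)‖⁻¹) • z n`
at time `n`, of size at least `n ‖z n‖ / sup ‖z‖` yet at most `K (1 + c)`, where `c` bounds the
growth of bounded orbits (Banach–Steinhaus). The backward half-line is the forward one of the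
reversed equation, with the maps `(A (-n - 1))⁻¹`.

To split `u`, solve the equation with forcing `u` at time `-1` and nothing else: the solution `v`
is bounded, `v 0` has a bounded forward orbit and `u - v 0` a bounded backward orbit.
-/

open Filter Topology

open scoped ENNReal

def HasBoundedSolutions {ι E : Type*} [Add ι] [One ι] [NormedAddCommGroup E] [NormedSpace ℝ E]
    (a : ι → E →L[ℝ] E) (K : ℝ) : Prop :=
  ∀ (w : ι → E) (C : ℝ), (∀ i, ‖w i‖ ≤ C) →
    ∃ v : ι → E, (∀ i, ‖v i‖ ≤ K * C) ∧ ∀ i, v (i + 1) = a i (v i) + w i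

lemma memℓp_infty_of_norm_le {ι E : Type*} [NormedAddCommGroup E] {w : ι → E} {C : ℝ}
    (hw : ∀ i, ‖w i‖ ≤ C) : Memℓp w ∞ :=
  memℓp_infty ⟨C, by rintro _ ⟨i, rfl⟩; exact hw i⟩

section DifferenceOperator

variable {E : Type*} [NormedAddCommGroup E] [NormedSpace ℝ E] (a : ℤ → E →L[ℝ] E) {N : ℝ}

lemma norm_succ_sub_apply_le (ha : ∀ k, ‖a k‖ ≤ N) (v : lp (fun _ : ℤ => E) ∞) (k : ℤ) :
    ‖v (k + 1) - a k (v k)‖ ≤ (1 + N) * ‖v‖ := by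
  have hv : ∀ j, ‖v j‖ ≤ ‖v‖ := lp.norm_apply_le_norm ENNReal.top_ne_zero v
  have hN : 0 ≤ N := (norm_nonneg _).trans (ha 0)
  calc ‖v (k + 1) - a k (v k)‖ ≤ ‖v (k + 1)‖ + ‖a k‖ * ‖v k‖ := by
        grw [norm_sub_le, (a k).le_opNorm]
    _ ≤ ‖v‖ + N * ‖v‖ := by grw [hv, ha k, hv]
    _ = (1 + N) * ‖v‖ := by ring

noncomputable def differenceOperator (ha : ∀ k, ‖a k‖ ≤ N) :
    lp (fun _ : ℤ => E) ∞ →L[ℝ] lp (fun _ : ℤ => E) ∞ :=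
  LinearMap.mkContinuous
    { toFun := fun v => ⟨fun k => v (k + 1) - a k (v k),
        memℓp_infty ⟨(1 + N) * ‖v‖, by
          rintro _ ⟨k, rfl⟩; exact norm_succ_sub_apply_le a ha v k⟩⟩
      map_add' := fun v w => by ext k; simp only [lp.coeFn_add, Pi.add_apply, map_add]; abel
      map_smul' := fun c v => by ext k; simp [smul_sub] }
    (1 + N) fun v =>
      lp.norm_le_of_forall_le (by have := (norm_nonneg _).trans (ha 0); positivity)
        (norm_succ_sub_apply_le a ha v)

lemma differenceOperator_apply (ha : ∀ k, ‖a k‖ ≤ N) (v : lp (fun _ : ℤ => E) ∞) (k : ℤ) :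
    differenceOperator a ha v k = v (k + 1) - a k (v k) := rfl

theorem exists_hasBoundedSolutions [CompleteSpace E] (ha : ∀ k, ‖a k‖ ≤ N)
    (hsolv : ∀ w : ℤ → E, (∃ C : ℝ, ∀ k, ‖w k‖ ≤ C) →
      ∃ v : ℤ → E, (∃ C : ℝ, ∀ k, ‖v k‖ ≤ C) ∧ ∀ k, v (k + 1) = a k (v k) + w k) :
    ∃ K, HasBoundedSolutions a K := by
  have hsurj : Function.Surjective (differenceOperator a ha) := by
    intro w
    obtain ⟨v, ⟨C, hv⟩, hrec⟩ :=
      hsolv w ⟨‖w‖, lp.norm_apply_le_norm ENNReal.top_ne_zero w⟩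
    refine ⟨⟨v, memℓp_infty_of_norm_le hv⟩, lp.ext (funext fun k => ?_)⟩
    simp [differenceOperator_apply, hrec]
  obtain ⟨K, hK, hpre⟩ := (differenceOperator a ha).exists_preimage_norm_le hsurj
  refine ⟨K, fun w C hw => ?_⟩
  obtain ⟨v, hTv, hv⟩ := hpre ⟨w, memℓp_infty_of_norm_le hw⟩
  refine ⟨v, fun k => ?_, fun k => ?_⟩
  · calc ‖v k‖ ≤ ‖v‖ := lp.norm_apply_le_norm ENNReal.top_ne_zero v k
      _ ≤ K * C := hv.trans (by
          gcongr; exact lp.norm_le_of_forall_le ((norm_nonneg _).trans (hw 0)) hw)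
  · have := congrArg (fun u : lp (fun _ : ℤ => E) ∞ => u k) hTv
    simp only [differenceOperator_apply] at this
    rw [← this]; abel

end DifferenceOperator

section HalfLine

variable {E : Type*} [NormedAddCommGroup E] [NormedSpace ℝ E] {a : ℕ → E →L[ℝ] E}

variable (a) in
noncomputable def linearCocycle : ℕ → E →L[ℝ] E
  | 0 => 1
  | n + 1 => (a n).comp (linearCocycle n)

lemma eq_linearCocycle_apply {z : ℕ → E} (hz : ∀ n, z (n + 1) = a n (z n)) (n : ℕ) :
    z n = linearCocycle a n (z 0) := by
  induction n with
  | zero => rfl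
  | succ n ih => rw [hz, ih]; rfl

lemma eq_zero_of_eq_zero_of_le {z : ℕ → E} (hz : ∀ n, z (n + 1) = a n (z n)) {i n : ℕ}
    (hi : z i = 0) (hin : i ≤ n) : z n = 0 := by
  induction n, hin using Nat.le_induction with
  | base => exact hi
  | succ n _ ih => rw [hz, ih, map_zero]

variable (a) in
def boundedOrbits : Submodule ℝ E where
  carrier := {x | ∃ M, ∀ n, ‖linearCocycle a n x‖ ≤ M}
  add_mem' := by
    rintro x y ⟨M, hx⟩ ⟨M', hy⟩
    exact ⟨M + M', fun n => by grw [map_add, norm_add_le, hx, hy]⟩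
  zero_mem' := ⟨0, by simp⟩
  smul_mem' := by
    rintro c x ⟨M, hx⟩
    exact ⟨‖c‖ * M, fun n => by rw [map_smul, norm_smul]; gcongr; exact hx n⟩

/-- `boundedOrbits a` need not be closed; finite dimension makes it complete, as
Banach–Steinhaus requires. -/
lemma exists_norm_linearCocycle_le [FiniteDimensional ℝ E] :
    ∃ c, 0 ≤ c ∧ ∀ x ∈ boundedOrbits a, ∀ n, ‖linearCocycle a n x‖ ≤ c * ‖x‖ := by
  obtain ⟨c, hc⟩ := banach_steinhaus
    (g := fun n => (linearCocycle a n).comp (boundedOrbits a).subtypeL) fun x => x.2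
  exact ⟨c, (norm_nonneg _).trans (hc 0), fun x hx n =>
    ((linearCocycle a n).comp (boundedOrbits a).subtypeL).le_of_opNorm_le (hc n) ⟨x, hx⟩⟩

/-- The forcing `‖z (j + 1)‖⁻¹ • z (j + 1)`, `j < n`, has the explicit solution
`(∑_{j < min k n} ‖z (j + 1)‖⁻¹) • z k` (also where `z` vanishes, since `0⁻¹ = 0`); it differs
from a bounded solution by a bounded homogeneous one, which grows at most by the factor `c`. -/
lemma sum_inv_norm_mul_norm_le {K c : ℝ} (hsolv : HasBoundedSolutions a K) (hc : 0 ≤ c)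
    (hcocycle : ∀ x ∈ boundedOrbits a, ∀ n, ‖linearCocycle a n x‖ ≤ c * ‖x‖)
    {z : ℕ → E} (hz : ∀ n, z (n + 1) = a n (z n)) {M : ℝ} (hM : ∀ n, ‖z n‖ ≤ M) (n : ℕ) :
    (∑ j ∈ Finset.range n, ‖z (j + 1)‖⁻¹) * ‖z n‖ ≤ K * (1 + c) := by
  set S : ℕ → ℝ := fun k => ∑ j ∈ Finset.range k, ‖z (j + 1)‖⁻¹
  have hS_mono : Monotone S := fun i j hij =>
    Finset.sum_le_sum_of_subset_of_nonneg (Finset.range_mono hij) fun _ _ _ => by positivity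
  set w : ℕ → E := fun j => if j < n then ‖z (j + 1)‖⁻¹ • z (j + 1) else 0
  have hw : ∀ j, ‖w j‖ ≤ 1 := by
    intro j
    simp only [w]
    split_ifs
    · rw [norm_smul, norm_inv, norm_norm]
      exact inv_mul_le_one_of_le₀ le_rfl (norm_nonneg _)
    · simp
  obtain ⟨v, hvK, hv⟩ := hsolv w 1 hw
  simp only [mul_one] at hvK
  set p : ℕ → E := fun k => S (min k n) • z k
  have hp : ∀ k, p (k + 1) = a k (p k) + w k := by
    intro k
    simp only [p, w, map_smul, ← hz]
    split_ifs with hk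
    · rw [min_eq_left (by omega), min_eq_left hk.le, ← add_smul]
      exact congrArg (· • z (k + 1)) (Finset.sum_range_succ _ _)
    · rw [min_eq_right (by omega), min_eq_right (by omega), add_zero]
  set g : ℕ → E := v - p
  have hg : ∀ k, g (k + 1) = a k (g k) := fun k => by
    simp only [g, Pi.sub_apply, hv, hp, map_sub]; abel
  have hg0 : g 0 = v 0 := by simp [g, p, S]
  have hM0 : 0 ≤ M := (norm_nonneg _).trans (hM 0)
  have hg_bdd : g 0 ∈ boundedOrbits a := ⟨K + S n * M, fun k => by
    rw [← eq_linearCocycle_apply hg]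
    grw [show g k = v k - p k from rfl, norm_sub_le, norm_smul, hvK, hM,
      Real.norm_of_nonneg (by positivity), hS_mono (min_le_right k n)]⟩
  calc S n * ‖z n‖ = ‖v n - g n‖ := by
        simp [g, p, norm_smul, Real.norm_of_nonneg (show 0 ≤ S n by positivity)]
    _ ≤ K + c * K := by
        grw [norm_sub_le, hvK, eq_linearCocycle_apply hg, hcocycle _ hg_bdd, hg0, hvK]
    _ = K * (1 + c) := by ring

lemma natCast_le_mul_sum_inv_norm {z : ℕ → E} (hz : ∀ n, z (n + 1) = a n (z n)) {M : ℝ}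
    (hM : ∀ n, ‖z n‖ ≤ M) {n : ℕ} (hn : z n ≠ 0) :
    (n : ℝ) ≤ M * ∑ j ∈ Finset.range n, ‖z (j + 1)‖⁻¹ := by
  rw [Finset.mul_sum]
  calc (n : ℝ) = ∑ j ∈ Finset.range n, (1 : ℝ) := by simp
    _ ≤ _ := Finset.sum_le_sum fun j hj => by
        have hzj : z (j + 1) ≠ 0 := fun h =>
          hn (eq_zero_of_eq_zero_of_le hz h (Finset.mem_range.mp hj))
        rw [← div_eq_mul_inv, one_le_div (norm_pos_iff.mpr hzj)]
        exact hM _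

theorem tendsto_zero_of_hasBoundedSolutions [FiniteDimensional ℝ E] {K : ℝ}
    (hsolv : HasBoundedSolutions a K) {z : ℕ → E} (hz : ∀ n, z (n + 1) = a n (z n)) {M : ℝ}
    (hM : ∀ n, ‖z n‖ ≤ M) :
    Tendsto z atTop (𝓝 0) := by
  obtain ⟨c, hc, hcocycle⟩ := exists_norm_linearCocycle_le (a := a)
  have hM0 : 0 ≤ M := (norm_nonneg _).trans (hM 0)
  have hbound : ∀ n : ℕ, (n : ℝ) * ‖z n‖ ≤ M * (K * (1 + c)) := fun n => by
    rcases eq_or_ne (z n) 0 with h | h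
    · obtain ⟨v, hv, -⟩ := hsolv 0 1 (by simp)
      have hK : 0 ≤ K := by simpa using (norm_nonneg _).trans (hv 0)
      rw [h, norm_zero, mul_zero]
      positivity
    · grw [natCast_le_mul_sum_inv_norm hz hM h, mul_assoc,
        sum_inv_norm_mul_norm_le hsolv hc hcocycle hz hM n]
  refine squeeze_zero_norm' ?_ (tendsto_const_div_atTop_nhds_zero_nat (M * (K * (1 + c))))
  filter_upwards [eventually_gt_atTop 0] with n hn
  rw [le_div_iff₀ (by positivity), mul_comm]
  exact hbound n

end HalfLine

namespace HasBoundedSolutions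

variable {E : Type*} [NormedAddCommGroup E] [NormedSpace ℝ E] {K : ℝ}

lemma restrict_nat {a : ℤ → E →L[ℝ] E} (h : HasBoundedSolutions a K) :
    HasBoundedSolutions (fun n : ℕ => a n) K := by
  intro w C hw
  obtain ⟨v, hv, hrec⟩ := h (fun k => w k.toNat) C fun k => hw _
  exact ⟨fun n => v n, fun n => hv n, fun n => by simpa using hrec n⟩

/-- Read backwards, `v (k + 1) = A k (v k) + w k` becomes
`v k = (A k)⁻¹ (v (k + 1)) - (A k)⁻¹ (w k)`, so the reversed forcing `w n` is produced by the
forcing `-A k (w n)` at time `k = -n - 1`. -/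
lemma reverse_nat {A : ℤ → E ≃L[ℝ] E} {N : ℝ} (hA : ∀ k, ‖(A k : E →L[ℝ] E)‖ ≤ N)
    (h : HasBoundedSolutions (fun k => (A k : E →L[ℝ] E)) K) :
    HasBoundedSolutions (fun n : ℕ => ((A (-n - 1)).symm : E →L[ℝ] E)) (K * N) := by
  intro w C hw
  have hN : 0 ≤ N := (norm_nonneg _).trans (hA 0)
  obtain ⟨v, hv, hrec⟩ := h (fun k => -A k (w (-k - 1).toNat)) (N * C) fun k => by
    rw [norm_neg]
    exact ((A k : E →L[ℝ] E).le_of_opNorm_le (hA k) _).trans (by gcongr; exact hw _)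
  refine ⟨fun n => v (-n), fun n => by rw [mul_assoc]; exact hv _, fun n => ?_⟩
  have hn := hrec (-n - 1)
  simp only [sub_add_cancel, neg_sub, sub_neg_eq_add, add_sub_cancel_left, Int.toNat_natCast,
    ContinuousLinearEquiv.coe_coe, ← map_neg, ← map_add] at hn
  simp [hn, neg_add_eq_sub]

end HasBoundedSolutions

section TransitionMaps

variable {m : ℕ} (A : ℤ → (EuclideanSpace ℝ (Fin m) ≃L[ℝ] EuclideanSpace ℝ (Fin m)))

local notation "𝔼" => EuclideanSpace ℝ (Fin m)

lemma PhiPos_apply_of_succ_eq {z : ℤ → 𝔼} {l : ℤ} (hz : ∀ k, l ≤ k → z (k + 1) = A k (z k))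
    (n : ℕ) : PhiPos A l n (z l) = z (l + n) := by
  induction n with
  | zero => simp [PhiPos]
  | succ n ih =>
    rw [PhiPos, ContinuousLinearMap.comp_apply, ih, Nat.cast_succ, ← add_assoc]
    exact (hz _ (by omega)).symm

lemma PhiNeg_apply_of_succ_eq {z : ℤ → 𝔼} {l : ℤ} (hz : ∀ k, k < l → z (k + 1) = A k (z k))
    (k : ℤ) (n : ℕ) (hkn : k + n ≤ l) : PhiNeg A k n (z (k + n)) = z k := by
  induction n with
  | zero => simp [PhiNeg]
  | succ n ih =>
    rw [PhiNeg, ContinuousLinearMap.comp_apply, Nat.cast_succ, ← add_assoc,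
      hz _ (by omega), ContinuousLinearEquiv.coe_coe, ContinuousLinearEquiv.symm_apply_apply]
    exact ih (by omega)

lemma Phi_apply_of_nonneg {z : ℤ → 𝔼} (hz : ∀ k, 0 ≤ k → z (k + 1) = A k (z k)) {k : ℤ}
    (hk : 0 ≤ k) : Phi A k 0 (z 0) = z k := by
  rw [Phi, if_pos hk, PhiPos_apply_of_succ_eq A hz, sub_zero, zero_add, Int.toNat_of_nonneg hk]

lemma Phi_apply_of_nonpos {z : ℤ → 𝔼} (hz : ∀ k, k < 0 → z (k + 1) = A k (z k)) {k : ℤ}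
    (hk : k ≤ 0) : Phi A k 0 (z 0) = z k := by
  rcases hk.eq_or_lt with rfl | hk
  · simp [Phi, PhiPos]
  · have := PhiNeg_apply_of_succ_eq A hz k (0 - k).toNat (by omega)
    rw [Int.toNat_of_nonneg (by omega), add_sub_cancel] at this
    rwa [Phi, if_neg (by omega)]

variable {A}

theorem mem_Bplus_of_bounded {K : ℝ} (hK : HasBoundedSolutions (fun k => (A k : 𝔼 →L[ℝ] 𝔼)) K)
    {z : ℤ → 𝔼} (hz : ∀ k, 0 ≤ k → z (k + 1) = A k (z k)) {M : ℝ}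
    (hM : ∀ k, 0 ≤ k → ‖z k‖ ≤ M) : z 0 ∈ Bplus A := by
  have hdecay : Tendsto (fun n : ℕ => z n) atTop (𝓝 0) :=
    tendsto_zero_of_hasBoundedSolutions hK.restrict_nat (fun n => by simpa using hz n n.cast_nonneg)
      fun n => hM n n.cast_nonneg
  change Tendsto (fun k : ℤ => ‖Phi A k 0 (z 0)‖) atTop (𝓝 0)
  rw [← Nat.map_cast_int_atTop, tendsto_map'_iff]
  simpa [Function.comp_def, Phi_apply_of_nonneg A hz] using hdecay.norm

theorem mem_Bminus_of_bounded {N K : ℝ} (hA : ∀ k, ‖(A k : 𝔼 →L[ℝ] 𝔼)‖ ≤ N)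
    (hK : HasBoundedSolutions (fun k => (A k : 𝔼 →L[ℝ] 𝔼)) K)
    {z : ℤ → 𝔼} (hz : ∀ k, k < 0 → z (k + 1) = A k (z k)) {M : ℝ}
    (hM : ∀ k, k ≤ 0 → ‖z k‖ ≤ M) : z 0 ∈ Bminus A := by
  have hdecay : Tendsto (fun n : ℕ => z (-n)) atTop (𝓝 0) := by
    refine tendsto_zero_of_hasBoundedSolutions (hK.reverse_nat hA) (fun n => ?_)
      fun n => hM _ (by omega)
    have hn := hz (-n - 1) (by omega)
    rw [sub_add_cancel] at hn
    rw [ContinuousLinearEquiv.coe_coe, ContinuousLinearEquiv.eq_symm_apply, hn, Nat.cast_succ,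
      neg_add']
  change Tendsto (fun k : ℤ => ‖Phi A k 0 (z 0)‖) atBot (𝓝 0)
  rw [← map_neg_atTop, tendsto_map'_iff, ← Nat.map_cast_int_atTop, tendsto_map'_iff]
  simpa [Function.comp_def, Phi_apply_of_nonpos A hz] using hdecay.norm

end TransitionMaps

theorem transverse_of_bounded_solvability_general
    {m : ℕ} (A : ℤ → (EuclideanSpace ℝ (Fin m) ≃L[ℝ] EuclideanSpace ℝ (Fin m)))
    (N : ℝ)
    (hA : ∀ k : ℤ, ‖(A k : EuclideanSpace ℝ (Fin m) →L[ℝ] EuclideanSpace ℝ (Fin m))‖ ≤ N)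
    (hsolv : ∀ w : ℤ → EuclideanSpace ℝ (Fin m), (∃ C : ℝ, ∀ k : ℤ, ‖w k‖ ≤ C) →
      ∃ v : ℤ → EuclideanSpace ℝ (Fin m), (∃ C : ℝ, ∀ k : ℤ, ‖v k‖ ≤ C) ∧
        ∀ k : ℤ, v (k + 1) = A k (v k) + w k) :
    ∀ u : EuclideanSpace ℝ (Fin m), ∃ x ∈ Bplus A, ∃ y ∈ Bminus A, u = x + y := by
  intro u
  obtain ⟨K, hK⟩ := exists_hasBoundedSolutions _ hA hsolv
  have hsingle : ∀ (i k : ℤ), ‖(Pi.single i u : ℤ → _) k‖ ≤ ‖u‖ := fun i k => by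
    rcases eq_or_ne k i with rfl | hki <;> simp [*]
  obtain ⟨v, ⟨C, hv⟩, hrec⟩ := hsolv (Pi.single (-1) u) ⟨‖u‖, hsingle (-1)⟩
  have hx : v 0 ∈ Bplus A :=
    mem_Bplus_of_bounded hK (fun k hk => by simp [hrec, show k ≠ -1 by omega]) fun k _ => hv k
  have hy : ((Pi.single 0 u : ℤ → EuclideanSpace ℝ (Fin m)) - v) 0 ∈ Bminus A := by
    refine mem_Bminus_of_bounded hA hK (M := ‖u‖ + C) (fun k hk => ?_) fun k _ => ?_
    · rcases eq_or_ne k (-1) with rfl | hk1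
      · have h0 := hrec (-1)
        rw [neg_add_cancel, Pi.single_eq_same] at h0
        simp [h0]
      · simp [hrec, hk1, show k + 1 ≠ 0 by omega, show k ≠ 0 by omega]
    · grw [Pi.sub_apply, norm_sub_le, hsingle, hv]
  exact ⟨v 0, hx, u - v 0, by simpa using hy, by abel⟩

/-- If for every bounded sequence `{w_k}` the difference equation `v_{k+1} = A_k v_k + w_k`
has a bounded solution `{v_k}`, then `B⁺(𝒜) + B⁻(𝒜) = ℝ^m`. -/
theorem transverse_of_bounded_solvability
    {m : ℕ} (A : ℤ → (EuclideanSpace ℝ (Fin m) ≃L[ℝ] EuclideanSpace ℝ (Fin m)))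
    (N : ℝ) (hN : 0 < N)
    (hA : ∀ k : ℤ, ‖(A k : EuclideanSpace ℝ (Fin m) →L[ℝ] EuclideanSpace ℝ (Fin m))‖ ≤ N)
    (hAinv : ∀ k : ℤ,
      ‖((A k).symm : EuclideanSpace ℝ (Fin m) →L[ℝ] EuclideanSpace ℝ (Fin m))‖ ≤ N)
    (hsolv : ∀ w : ℤ → EuclideanSpace ℝ (Fin m), (∃ C : ℝ, ∀ k : ℤ, ‖w k‖ ≤ C) →
      ∃ v : ℤ → EuclideanSpace ℝ (Fin m), (∃ C : ℝ, ∀ k : ℤ, ‖v k‖ ≤ C) ∧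
        ∀ k : ℤ, v (k + 1) = A k (v k) + w k) :
    ∀ u : EuclideanSpace ℝ (Fin m), ∃ x ∈ Bplus A, ∃ y ∈ Bminus A, u = x + y :=
  transverse_of_bounded_solvability_general A N hA hsolv
end
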